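/- arXiv:math/0702516 — 2 statements merged into one kernel-verified Lean document; each statement's English description precedes it below -/
import Mathlib

section
/- Let q = 2p with p ∈ ℕ, p ≥ 2, and λ = 2cos(π/q). With ℓ_n = T_α^n((α−1)λ), r_n = T_α^n(αλ), δ_1 = 1/((α+1)λ), and d_p(x) = d(T_α^{p−1}(x)): (i) if 1/2 < α < 1/λ, then ℓ_0 < r_1 < ℓ_1 < ⋯ < r_{p−2} < ℓ_{p−2} < −δ_1 < r_{p−1} < 0 < ℓ_{p−1} < r_0, and moreover d_p(r_0) = d_p(ℓ_0) + 1 and ℓ_p = r_p; (ii) if α = 1/2, then ℓ_0 < r_1 = ℓ_1 < ⋯ < r_{p−2} = ℓ_{p−2} < −δ_1 < r_{p−1} = ℓ_{p−1} = 0 < r_0; (iii) if α = 1/λ, then ℓ_0 = r_1 < ℓ_1 = r_2 < ⋯ < ℓ_{p−2} = r_{p−1} = −δ_1 < 0 < r_0. -/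
open Set MeasureTheory

/-- The digit function `d(x) = ⌊|1/(xλ)| + 1 - α⌋` of the α-Rosen continued fraction. -/
noncomputable def dfun (lam α x : ℝ) : ℤ := ⌊|1 / (x * lam)| + 1 - α⌋

/-- The α-Rosen continued fraction map `T_α`. -/
noncomputable def Tmap (lam α x : ℝ) : ℝ :=
  if x = 0 then 0 else |1 / x| - lam * (dfun lam α x : ℝ)

/-- The two-dimensional natural extension map `𝒯_α(x, y) = (T_α(x), 1/(d(x)λ + ε(x)y))`. -/
noncomputable def Tnat (lam α : ℝ) (z : ℝ × ℝ) : ℝ × ℝ :=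
  (Tmap lam α z.1, 1 / ((dfun lam α z.1 : ℝ) * lam + Real.sign z.1 * z.2))

/-!
On the interval `[-1/(αλ), -δ₁)` the map `T_α` has digit `1` and acts as the Möbius map
`M x = -1/x - λ`, which is increasing on the negative half-line and moves negative points to the
right. Since `λ = 2 cos c` with `c = π/(2p)`, the iterates of `M` are Chebyshev-like,
`Mⁿ x = -(sin((n+1)c) x + sin(nc)) / (sin(nc) x + sin((n-1)c))`; hence for `x ≤ 1 - λ` the points
`Mᵏ x` stay negative for `k ≤ p - 2` and `M^(p-1) x = (2x + λ)/(2 - λx - λ²)`.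

Write `y = αλ = r₀`. Then `ℓ₀ = y - λ = M(-1/y)` and `r₁ = M(-y)`, so `ℓ_{n-1} < r_n < ℓ_n` is the
image under `Mⁿ` of `-1/y < -y < ℓ₀`. As `M(-δ₁) = y`, the position of `ℓ_{p-2}` relative to `-δ₁`
is that of `ℓ_{p-1} = (2y - λ)/(2 - λy)` relative to `y`, and `|1/r_{p-1}| = |1/ℓ_{p-1}| + λ`
gives both the digit shift and `ℓ_p = r_p`. In the boundary cases `T_α` being even gives
`r₁ = ℓ₁` (`α = 1/2`, `r₀ = -ℓ₀`), and `T_α 1 = 1 - λ` gives `r₁ = ℓ₀` (`α = 1/λ`).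
-/

open Function

theorem Function.iterate_eq_iterate_of_map_eq {X : Type*} {f g : X → X} {x : X} {n : ℕ}
    (h : ∀ j < n, f (g^[j] x) = g (g^[j] x)) : f^[n] x = g^[n] x := by
  induction n with
  | zero => rfl
  | succ n ih =>
    rw [iterate_succ_apply', iterate_succ_apply', ih fun j hj => h j (by omega), h n (by omega)]

theorem StrictMonoOn.iterate_lt_iterate {X : Type*} [Preorder X] {f : X → X} {s : Set X}
    (hf : StrictMonoOn f s) {a b : X} {n : ℕ} (ha : ∀ j < n, f^[j] a ∈ s)
    (hb : ∀ j < n, f^[j] b ∈ s) (hab : a < b) : f^[n] a < f^[n] b := by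
  induction n with
  | zero => exact hab
  | succ n ih =>
    rw [iterate_succ_apply', iterate_succ_apply']
    exact hf (ha n (by omega)) (hb n (by omega)) (ih (fun j hj => ha j (by omega))
      fun j hj => hb j (by omega))

namespace Rosen

open Real

noncomputable def negBranch (lam x : ℝ) : ℝ := -x⁻¹ - lam

noncomputable def cylinderOne (lam α : ℝ) : Set ℝ :=
  Ico (-1 / (α * lam)) (-1 / ((α + 1) * lam))

theorem Tmap_neg (lam α x : ℝ) : Tmap lam α (-x) = Tmap lam α x := by
  simp [Tmap, dfun, abs_mul]

theorem Tmap_eq_negBranch {lam α x : ℝ} (hlam : 0 < lam) (hα : 0 < α)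
    (hx : x ∈ cylinderOne lam α) : Tmap lam α x = negBranch lam x := by
  obtain ⟨hlo, hhi⟩ := hx
  have hneg : x < 0 := hhi.trans (div_neg_of_neg_of_pos (by norm_num) (by positivity))
  have hxl : 0 < -x * lam := by nlinarith
  have habs : |1 / (x * lam)| = 1 / (-x * lam) := by
    rw [abs_of_neg (by rw [one_div]; exact inv_lt_zero.2 (by nlinarith)), neg_mul, div_neg]
  have hdigit : dfun lam α x = 1 := by
    rw [div_le_iff₀ (by positivity)] at hlo
    rw [lt_div_iff₀ (by positivity)] at hhi
    have h1 : α ≤ 1 / (-x * lam) := by rw [le_div_iff₀ hxl]; linarith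
    have h2 : 1 / (-x * lam) < α + 1 := by rw [div_lt_iff₀ hxl]; linarith
    rw [dfun, habs, Int.floor_eq_iff]
    push_cast
    constructor <;> linarith
  rw [Tmap, if_neg hneg.ne, hdigit, abs_of_neg (by rwa [one_div, inv_lt_zero]), negBranch]
  push_cast
  ring

theorem dfun_eq_add_of_abs_inv_eq {lam α u v : ℝ} (hlam : 0 < lam) (k : ℤ)
    (h : |1 / v| = |1 / u| + k * lam) : dfun lam α v = dfun lam α u + k := by
  have : |1 / (v * lam)| = |1 / (u * lam)| + k := by
    simp only [div_mul_eq_div_div, abs_div _ lam, abs_of_pos hlam]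
    rw [h, add_div, mul_div_cancel_right₀ _ hlam.ne']
  rw [dfun, dfun, this, add_right_comm, add_sub_right_comm, Int.floor_add_intCast]

theorem Tmap_eq_of_abs_inv_eq {lam α u v : ℝ} (hlam : 0 < lam) (hu : u ≠ 0) (hv : v ≠ 0) (k : ℤ)
    (h : |1 / v| = |1 / u| + k * lam) : Tmap lam α v = Tmap lam α u := by
  rw [Tmap, Tmap, if_neg hu, if_neg hv, dfun_eq_add_of_abs_inv_eq hlam k h, h]
  push_cast
  ring

theorem negBranch_strictMonoOn (lam : ℝ) : StrictMonoOn (negBranch lam) (Iio 0) := by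
  intro a ha b hb hab
  simp only [negBranch, sub_lt_sub_iff_right, neg_lt_neg_iff]
  exact inv_lt_inv_of_neg hb ha |>.2 hab

theorem lt_negBranch {lam x : ℝ} (h2 : lam < 2) (hx : x < 0) :
    x < negBranch lam x := by
  have hq : 0 < x ^ 2 + lam * x + 1 := by nlinarith [sq_nonneg (x + lam / 2)]
  have : negBranch lam x - x = (x ^ 2 + lam * x + 1) / -x := by
    rw [negBranch, eq_div_iff (neg_ne_zero.2 hx.ne)]; field_simp [hx.ne]; ring
  linarith [div_pos hq (neg_pos.2 hx)]

theorem negBranch_neg_inv {lam a : ℝ} : negBranch lam (-1 / a) = a - lam := by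
  simp [negBranch, neg_div, inv_neg]

/-- Read off from the matrix of `(negBranch (2 cos c))^[n]`,
`[[-2 cos c, -1], [1, 0]]ⁿ = [[-sin((n+1)c), -sin(nc)], [sin(nc), sin((n-1)c)]] / sin c`. -/
noncomputable def orbitNum (c x t : ℝ) : ℝ := sin ((t + 1) * c) * x + sin (t * c)

theorem orbitNum_add_one (c x t : ℝ) :
    orbitNum c x (t + 1) = 2 * cos c * orbitNum c x t - orbitNum c x (t - 1) := by
  have h1 : 2 * sin (t * c + c) * cos c = sin (t * c) + sin (t * c + c + c) := by
    rw [two_mul_sin_mul_cos, add_sub_cancel_right]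
  have h2 := two_mul_sin_mul_cos (t * c) c
  simp only [orbitNum]
  rw [show (t + 1 + 1) * c = t * c + c + c by ring, show (t + 1) * c = t * c + c by ring,
    show (t - 1 + 1) * c = t * c by ring, show (t - 1) * c = t * c - c by ring]
  linear_combination (-x) * h1 - h2

theorem negBranch_iterate {c lam x : ℝ} (hc : sin c ≠ 0) (hlam : lam = 2 * cos c) {n : ℕ}
    (h : ∀ k < n, orbitNum c x k ≠ 0) :
    (negBranch lam)^[n] x = -orbitNum c x n / orbitNum c x (n - 1) := by
  induction n with
  | zero => simp [orbitNum, neg_div_neg_eq, mul_div_cancel_left₀ _ hc]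
  | succ n ih =>
    rw [iterate_succ_apply', ih fun k hk => h k (by omega), negBranch, neg_div, inv_neg, neg_neg,
      inv_div, Nat.cast_succ, add_sub_cancel_right, orbitNum_add_one, ← hlam]
    field_simp [h n (by omega)]
    ring

section QuarterPeriod

variable {p : ℕ} {c lam x : ℝ}

theorem nat_mul_le_pi_div_two (hc : 0 < c) (hpc : p * c = π / 2) {k : ℕ} (hk : k ≤ p) :
    (k : ℝ) * c ≤ π / 2 :=
  hpc ▸ mul_le_mul_of_nonneg_right (by exact_mod_cast hk) hc.le

theorem sin_nat_mul_pos (hc : 0 < c) (hpc : p * c = π / 2) {k : ℕ} (hk₀ : 1 ≤ k) (hk : k ≤ p) :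
    0 < sin (k * c) := by
  have h := nat_mul_le_pi_div_two hc hpc hk
  have : (1 : ℝ) ≤ k := by exact_mod_cast hk₀
  exact sin_pos_of_pos_of_lt_pi (by positivity) (by linarith [pi_pos])

theorem sin_pos_of_nat_mul_eq (hc : 0 < c) (hpc : p * c = π / 2) (hp : 1 ≤ p) : 0 < sin c := by
  simpa using sin_nat_mul_pos hc hpc le_rfl hp

theorem sin_nat_mul_lt_sin_succ_mul (hc : 0 < c) (hpc : p * c = π / 2) {k : ℕ} (hk : k + 1 ≤ p) :
    sin (k * c) < sin ((k + 1) * c) := by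
  have h := nat_mul_le_pi_div_two hc hpc hk
  push_cast at h
  refine strictMonoOn_sin ⟨?_, ?_⟩ ⟨?_, ?_⟩ ?_ <;> nlinarith [pi_pos, Nat.cast_nonneg (α := ℝ) k]

theorem orbitNum_nat_neg (hc : 0 < c) (hpc : p * c = π / 2) (hlam : lam = 2 * cos c)
    (hx : x ≤ 1 - lam) {k : ℕ} (hk : k + 2 ≤ p) : orbitNum c x k < 0 := by
  have hpos := sin_nat_mul_pos hc hpc (k := k + 1) (by omega) (by omega)
  have hmono := sin_nat_mul_lt_sin_succ_mul hc hpc (k := k + 1) (by omega)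
  have hrec : 2 * sin ((k + 1) * c) * cos c = sin (k * c) + sin ((k + 1 + 1) * c) := by
    rw [two_mul_sin_mul_cos, show (k + 1) * c - c = k * c by ring,
      show (k + 1) * c + c = (k + 1 + 1) * c by ring]
  push_cast at hpos hmono
  rw [orbitNum]
  nlinarith [mul_le_mul_of_nonneg_left hx hpos.le]

theorem orbitNum_pred_neg (hc : 0 < c) (hpc : p * c = π / 2) (hlam : lam = 2 * cos c)
    (hx : x ≤ 1 - lam) {k : ℕ} (hk : k + 1 ≤ p) : orbitNum c x (k - 1) < 0 := by
  cases k with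
  | zero =>
    simpa [orbitNum] using sin_pos_of_nat_mul_eq hc hpc hk
  | succ j =>
    rw [Nat.cast_succ, add_sub_cancel_right]
    exact orbitNum_nat_neg hc hpc hlam hx (by omega)

theorem negBranch_iterate_neg (hc : 0 < c) (hpc : p * c = π / 2) (hlam : lam = 2 * cos c)
    (hx : x ≤ 1 - lam) {k : ℕ} (hk : k + 2 ≤ p) : (negBranch lam)^[k] x < 0 := by
  have hsin := (sin_pos_of_nat_mul_eq hc hpc (by omega)).ne'
  rw [negBranch_iterate hsin hlam fun j hj => (orbitNum_nat_neg hc hpc hlam hx (by omega)).ne]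
  exact div_neg_of_pos_of_neg (neg_pos.2 (orbitNum_nat_neg hc hpc hlam hx hk))
    (orbitNum_pred_neg hc hpc hlam hx (by omega))

theorem negBranch_iterate_eq (hc : 0 < c) (hpc : p * c = π / 2) (hlam : lam = 2 * cos c)
    (hx : x ≤ 1 - lam) {n : ℕ} (hn : n + 1 = p) :
    (negBranch lam)^[n] x = (2 * x + lam) / (2 - lam * x - lam ^ 2) := by
  have hsin := (sin_pos_of_nat_mul_eq hc hpc (by omega)).ne'
  have hn' : (n : ℝ) * c = π / 2 - c := by
    rw [← hpc, ← hn]; push_cast; ring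
  rw [negBranch_iterate hsin hlam fun j hj => (orbitNum_nat_neg hc hpc hlam hx (by omega)).ne,
    ← mul_div_mul_left _ _ (by norm_num : (-2 : ℝ) ≠ 0)]
  simp only [orbitNum, sub_one_mul, add_one_mul, hn', sub_add_cancel, sin_pi_div_two,
    sin_pi_div_two_sub, show π / 2 - c - c = π / 2 - 2 * c by ring, cos_two_mul, hlam]
  ring_nf

end QuarterPeriod

/-- For `y = αλ`, the two fractions are `r_{p-1}` and `ℓ_{p-1}`. -/
theorem orbit_values_at_pred {lam y : ℝ} (hlam : 0 < lam) (hy1 : y < 1)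
    (hy2 : lam / 2 < y) :
    -(1 / (y + lam)) < -(2 * y - lam) / (2 + lam * y - lam ^ 2) ∧
      -(2 * y - lam) / (2 + lam * y - lam ^ 2) < 0 ∧
      0 < (2 * y - lam) / (2 - lam * y) ∧ (2 * y - lam) / (2 - lam * y) < y ∧
      |1 / (-(2 * y - lam) / (2 + lam * y - lam ^ 2))| =
        |1 / ((2 * y - lam) / (2 - lam * y))| + (1 : ℤ) * lam := by
  have hnum : 0 < 2 * y - lam := by linarith
  have hA : 0 < 2 - lam * y := by nlinarith
  have hB : 0 < 2 + lam * y - lam ^ 2 := by nlinarith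
  refine ⟨?_, div_neg_of_neg_of_pos (by linarith) hB, div_pos hnum hA, ?_, ?_⟩
  · rw [neg_div, neg_lt_neg_iff, div_lt_div_iff₀ hB (by linarith)]
    nlinarith
  · rw [div_lt_iff₀ hA]
    nlinarith [mul_pos hlam (mul_pos (sub_pos.2 hy1) (by linarith : 0 < y + 1))]
  · rw [one_div_div, one_div_div, abs_of_pos (div_pos hA hnum), div_neg, abs_neg,
      abs_of_pos (div_pos hB hnum), Int.cast_one, one_mul]
    field_simp
    ring

noncomputable def leftOrbit (lam α : ℝ) (n : ℕ) : ℝ := (Tmap lam α)^[n] ((α - 1) * lam)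

noncomputable def rightOrbit (lam α : ℝ) (n : ℕ) : ℝ := (Tmap lam α)^[n] (α * lam)

theorem leftOrbit_succ (lam α : ℝ) (n : ℕ) :
    leftOrbit lam α (n + 1) = Tmap lam α (leftOrbit lam α n) :=
  iterate_succ_apply' ..

theorem rightOrbit_succ (lam α : ℝ) (n : ℕ) :
    rightOrbit lam α (n + 1) = Tmap lam α (rightOrbit lam α n) :=
  iterate_succ_apply' ..

/-- The standing assumptions of the even case, with `c = π/q = π/(2p)`. -/
structure EvenParams (p : ℕ) (c lam α : ℝ) : Prop where
  two_le : 2 ≤ p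
  mul_eq : p * c = π / 2
  lam_eq : lam = 2 * cos c
  half_le : 1 / 2 ≤ α
  le_inv : α ≤ 1 / lam

namespace EvenParams

variable {p : ℕ} {c lam α : ℝ}

theorem c_pos (h : EvenParams p c lam α) : 0 < c := by
  have : (0 : ℝ) < p := by exact_mod_cast (by have := h.two_le; omega : 0 < p)
  nlinarith [h.mul_eq, pi_pos]

theorem lam_lt_two (h : EvenParams p c lam α) : lam < 2 := by
  nlinarith [h.lam_eq, sin_pos_of_nat_mul_eq h.c_pos h.mul_eq (by linarith [h.two_le]),
    sin_sq_add_cos_sq c]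

theorem two_le_lam_sq (h : EvenParams p c lam α) : 2 ≤ lam ^ 2 := by
  have h2c := nat_mul_le_pi_div_two h.c_pos h.mul_eq h.two_le
  push_cast at h2c
  have := cos_nonneg_of_neg_pi_div_two_le_of_le (by linarith [pi_pos, h.c_pos]) h2c
  rw [h.lam_eq, mul_pow, cos_sq]
  linarith

theorem lam_pos (h : EvenParams p c lam α) : 0 < lam := by
  have h2c := nat_mul_le_pi_div_two h.c_pos h.mul_eq h.two_le
  push_cast at h2c
  rw [h.lam_eq]
  exact mul_pos two_pos (cos_pos_of_mem_Ioo ⟨by linarith [h.c_pos, pi_pos], by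
    linarith [pi_pos, h.c_pos]⟩)

theorem half_lam_le (h : EvenParams p c lam α) : lam / 2 ≤ α * lam := by
  nlinarith [h.half_le, h.lam_pos]

theorem mul_lam_le_one (h : EvenParams p c lam α) : α * lam ≤ 1 := by
  have := mul_le_mul_of_nonneg_right h.le_inv h.lam_pos.le
  rwa [one_div_mul_cancel h.lam_pos.ne'] at this

theorem α_pos (h : EvenParams p c lam α) : 0 < α := by linarith [h.half_le]

theorem left_le_one_sub (h : EvenParams p c lam α) : (α - 1) * lam ≤ 1 - lam := by
  linarith [h.mul_lam_le_one]

theorem iterate_left_neg (h : EvenParams p c lam α) {k : ℕ} (hk : k + 2 ≤ p) :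
    (negBranch lam)^[k] ((α - 1) * lam) < 0 :=
  negBranch_iterate_neg h.c_pos h.mul_eq h.lam_eq h.left_le_one_sub hk

theorem iterate_neg_right_neg (h : EvenParams p c lam α) {k : ℕ} (hk : k + 2 ≤ p) :
    (negBranch lam)^[k] (-(α * lam)) < 0 :=
  negBranch_iterate_neg h.c_pos h.mul_eq h.lam_eq
    (by linarith [h.half_lam_le, h.lam_lt_two]) hk

theorem iterate_left_lt_succ (h : EvenParams p c lam α) {k : ℕ} (hk : k + 2 ≤ p) :
    (negBranch lam)^[k] ((α - 1) * lam) < (negBranch lam)^[k + 1] ((α - 1) * lam) := by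
  rw [iterate_succ_apply']
  exact lt_negBranch h.lam_lt_two (h.iterate_left_neg hk)

theorem left_le_iterate_left (h : EvenParams p c lam α) {k : ℕ} (hk : k + 1 ≤ p) :
    (α - 1) * lam ≤ (negBranch lam)^[k] ((α - 1) * lam) := by
  induction k with
  | zero => rfl
  | succ k ih => exact (ih (by omega)).trans (h.iterate_left_lt_succ (by omega)).le

theorem iterate_left_pred (h : EvenParams p c lam α) {n : ℕ} (hn : n + 1 = p) :
    (negBranch lam)^[n] ((α - 1) * lam) = (2 * (α * lam) - lam) / (2 - lam * (α * lam)) := by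
  rw [negBranch_iterate_eq h.c_pos h.mul_eq h.lam_eq h.left_le_one_sub hn]
  ring_nf

theorem iterate_neg_right_pred (h : EvenParams p c lam α) {n : ℕ} (hn : n + 1 = p) :
    (negBranch lam)^[n] (-(α * lam)) =
      -(2 * (α * lam) - lam) / (2 + lam * (α * lam) - lam ^ 2) := by
  rw [negBranch_iterate_eq h.c_pos h.mul_eq h.lam_eq
    (by linarith [h.half_lam_le, h.lam_lt_two]) hn]
  ring_nf

theorem mem_cylinderOne (h : EvenParams p c lam α) {x : ℝ} (hx : x < 0)
    (hlo : -1 / (α * lam) ≤ x) (hhi : negBranch lam x < α * lam) : x ∈ cylinderOne lam α := by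
  have hδ : -1 / ((α + 1) * lam) < 0 :=
    div_neg_of_neg_of_pos (by norm_num) (by nlinarith [h.α_pos, h.lam_pos])
  refine ⟨hlo, (negBranch_strictMonoOn lam).lt_iff_lt hx hδ |>.1 ?_⟩
  rwa [negBranch_neg_inv, add_one_mul, add_sub_cancel_right]

theorem iterate_left_mem_cylinderOne (h : EvenParams p c lam α) {k : ℕ} (hk : k + 2 ≤ p)
    (hlt : k + 3 ≤ p ∨ α * lam < 1) :
    (negBranch lam)^[k] ((α - 1) * lam) ∈ cylinderOne lam α := by
  have hlo : -1 / (α * lam) ≤ (α - 1) * lam := by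
    have := lt_negBranch (x := -1 / (α * lam)) h.lam_lt_two
      (div_neg_of_neg_of_pos (by norm_num) (mul_pos h.α_pos h.lam_pos))
    rw [negBranch_neg_inv, ← sub_one_mul] at this
    exact this.le
  refine h.mem_cylinderOne (h.iterate_left_neg hk) (hlo.trans (h.left_le_iterate_left (by omega)))
    ?_
  rw [← iterate_succ_apply' (negBranch lam)]
  rcases hlt with hk3 | hy
  · exact (h.iterate_left_neg hk3).trans (mul_pos h.α_pos h.lam_pos)
  · obtain rfl | hk3 := (by omega : k + 2 = p ∨ k + 3 ≤ p)
    · have hden : 0 < 2 - lam * (α * lam) := by nlinarith [h.lam_lt_two, h.lam_pos]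
      rw [h.iterate_left_pred rfl, div_lt_iff₀ hden]
      have hy0 : 0 < 1 + α * lam := by linarith [mul_pos h.α_pos h.lam_pos]
      nlinarith [mul_pos h.lam_pos (mul_pos (sub_pos.2 hy) hy0)]
    · exact (h.iterate_left_neg hk3).trans (mul_pos h.α_pos h.lam_pos)

theorem leftOrbit_eq (h : EvenParams p c lam α) {k : ℕ} (hk : k + 1 ≤ p)
    (hlt : k + 2 ≤ p ∨ α * lam < 1) :
    leftOrbit lam α k = (negBranch lam)^[k] ((α - 1) * lam) :=
  iterate_eq_iterate_of_map_eq fun j hj =>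
    Tmap_eq_negBranch h.lam_pos h.α_pos
      (h.iterate_left_mem_cylinderOne (by omega) (hlt.imp (fun _ => by omega) id))

theorem Tmap_right (h : EvenParams p c lam α) :
    Tmap lam α (α * lam) = negBranch lam (-(α * lam)) := by
  have hy := mul_pos h.α_pos h.lam_pos
  rw [← Tmap_neg, Tmap_eq_negBranch h.lam_pos h.α_pos]
  refine ⟨?_, ?_⟩
  · rw [div_le_iff₀ hy]; nlinarith [h.mul_lam_le_one]
  · rw [lt_div_iff₀ (mul_pos (by linarith [h.α_pos]) h.lam_pos)]
    nlinarith [h.half_lam_le, h.two_le_lam_sq, h.lam_pos]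

theorem rightOrbit_succ_eq (h : EvenParams p c lam α) (n : ℕ) :
    rightOrbit lam α (n + 1) = (Tmap lam α)^[n] (negBranch lam (-(α * lam))) := by
  rw [rightOrbit, iterate_succ_apply, h.Tmap_right]

theorem iterate_right_between (h : EvenParams p c lam α) (hy1 : α * lam < 1)
    (hy2 : lam / 2 < α * lam) {n : ℕ} (hn : n + 2 ≤ p) :
    (negBranch lam)^[n] ((α - 1) * lam) < (negBranch lam)^[n] (negBranch lam (-(α * lam))) ∧
      (negBranch lam)^[n] (negBranch lam (-(α * lam))) <
        (negBranch lam)^[n + 1] ((α - 1) * lam) := by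
  have hy := mul_pos h.α_pos h.lam_pos
  constructor
  · refine (negBranch_strictMonoOn lam).iterate_lt_iterate
      (fun j hj => h.iterate_left_neg (by omega)) (fun j hj => ?_) ?_
    · rw [← iterate_succ_apply]; exact h.iterate_neg_right_neg (by omega)
    · rw [sub_one_mul, ← negBranch_neg_inv]
      refine negBranch_strictMonoOn lam (div_neg_of_neg_of_pos (by norm_num) hy)
        (neg_neg_of_pos hy) ?_
      rw [div_lt_iff₀ hy]; nlinarith
  · rw [← iterate_succ_apply]
    exact (negBranch_strictMonoOn lam).iterate_lt_iterate
      (fun j hj => h.iterate_neg_right_neg (by omega))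
      (fun j hj => h.iterate_left_neg (by omega)) (by linarith)

theorem rightOrbit_eq (h : EvenParams p c lam α) (hy1 : α * lam < 1)
    (hy2 : lam / 2 < α * lam) {n : ℕ} (hn : n + 2 ≤ p) :
    rightOrbit lam α (n + 1) = (negBranch lam)^[n + 1] (-(α * lam)) := by
  rw [h.rightOrbit_succ_eq, iterate_succ_apply]
  refine iterate_eq_iterate_of_map_eq fun j hj => Tmap_eq_negBranch h.lam_pos h.α_pos ?_
  obtain ⟨hlo, hhi⟩ := h.iterate_right_between hy1 hy2 (n := j) (by omega)
  exact Set.ordConnected_Ico.out (h.iterate_left_mem_cylinderOne (by omega) (Or.inr hy1))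
    (h.iterate_left_mem_cylinderOne (by omega) (Or.inr hy1)) ⟨hlo.le, hhi.le⟩

theorem orbits_of_half_lt_of_lt_inv (h : EvenParams p c lam α) (h1 : 1 / 2 < α)
    (h2 : α < 1 / lam) :
    (∀ n, 1 ≤ n → n ≤ p - 2 →
      leftOrbit lam α (n - 1) < rightOrbit lam α n ∧ rightOrbit lam α n < leftOrbit lam α n) ∧
    leftOrbit lam α (p - 2) < -(1 / ((α + 1) * lam)) ∧
    -(1 / ((α + 1) * lam)) < rightOrbit lam α (p - 1) ∧ rightOrbit lam α (p - 1) < 0 ∧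
    0 < leftOrbit lam α (p - 1) ∧ leftOrbit lam α (p - 1) < rightOrbit lam α 0 ∧
    dfun lam α (rightOrbit lam α (p - 1)) = dfun lam α (leftOrbit lam α (p - 1)) + 1 ∧
    leftOrbit lam α p = rightOrbit lam α p := by
  have hy1 : α * lam < 1 := by
    simpa [h.lam_pos.ne'] using mul_lt_mul_of_pos_right h2 h.lam_pos
  have hy2 : lam / 2 < α * lam := by nlinarith [h.lam_pos]
  obtain ⟨n, rfl⟩ : ∃ n, p = n + 2 := ⟨p - 2, by have := h.two_le; omega⟩
  simp only [show n + 2 - 2 = n by omega, show n + 2 - 1 = n + 1 by omega]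
  have hℓ (k : ℕ) (hk : k ≤ n + 1) := h.leftOrbit_eq (k := k) (by omega) (Or.inr hy1)
  have hu : leftOrbit lam α (n + 1) = (2 * (α * lam) - lam) / (2 - lam * (α * lam)) := by
    rw [hℓ _ le_rfl, h.iterate_left_pred rfl]
  have hv : rightOrbit lam α (n + 1) =
      -(2 * (α * lam) - lam) / (2 + lam * (α * lam) - lam ^ 2) := by
    rw [h.rightOrbit_eq hy1 hy2 le_rfl, h.iterate_neg_right_pred rfl]
  obtain ⟨hδ, hv0, hu0, huy, habs⟩ := orbit_values_at_pred h.lam_pos hy1 hy2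
  rw [← add_one_mul] at hδ
  rw [hu, hv]
  refine ⟨fun k hk1 hkn => ?_, ?_, hδ, hv0, hu0, huy, dfun_eq_add_of_abs_inv_eq h.lam_pos 1 habs,
    ?_⟩
  · obtain ⟨k, rfl⟩ : ∃ k', k = k' + 1 := ⟨k - 1, by omega⟩
    rw [Nat.add_sub_cancel, hℓ k (by omega), hℓ (k + 1) (by omega),
      h.rightOrbit_eq hy1 hy2 (by omega), iterate_succ_apply]
    exact h.iterate_right_between hy1 hy2 (by omega)
  · rw [hℓ n (by omega), ← neg_div]
    exact (h.iterate_left_mem_cylinderOne le_rfl (Or.inr hy1)).2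
  · rw [leftOrbit_succ, rightOrbit_succ, hu, hv]
    exact Tmap_eq_of_abs_inv_eq h.lam_pos hu0.ne' hv0.ne 1 habs |>.symm

theorem orbits_of_eq_half (h : EvenParams p c lam α) (hα : α = 1 / 2) :
    (∀ n, 1 ≤ n → n ≤ p - 2 →
      leftOrbit lam α (n - 1) < rightOrbit lam α n ∧ rightOrbit lam α n = leftOrbit lam α n) ∧
    leftOrbit lam α (p - 2) < -(1 / ((α + 1) * lam)) ∧
    -(1 / ((α + 1) * lam)) < rightOrbit lam α (p - 1) ∧
    rightOrbit lam α (p - 1) = leftOrbit lam α (p - 1) ∧ leftOrbit lam α (p - 1) = 0 ∧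
    0 < rightOrbit lam α 0 := by
  have hy1 : α * lam < 1 := by rw [hα]; linarith [h.lam_lt_two]
  obtain ⟨n, rfl⟩ : ∃ n, p = n + 2 := ⟨p - 2, by have := h.two_le; omega⟩
  simp only [show n + 2 - 2 = n by omega, show n + 2 - 1 = n + 1 by omega]
  have hℓ (k : ℕ) (hk : k ≤ n + 1) := h.leftOrbit_eq (k := k) (by omega) (Or.inr hy1)
  have hr (k : ℕ) : rightOrbit lam α (k + 1) = leftOrbit lam α (k + 1) := by
    rw [rightOrbit_succ_eq h, leftOrbit, iterate_succ_apply, ← Tmap_right h, ← Tmap_neg,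
      show -(α * lam) = (α - 1) * lam by rw [hα]; ring]
  have hzero : leftOrbit lam α (n + 1) = 0 := by
    rw [hℓ _ le_rfl, h.iterate_left_pred rfl, hα]; ring
  have hδ : 0 < 1 / ((α + 1) * lam) := by rw [hα]; exact div_pos one_pos (by linarith [h.lam_pos])
  refine ⟨fun k hk1 hkn => ?_, ?_, by rw [hr, hzero]; linarith, hr n, hzero,
    mul_pos h.α_pos h.lam_pos⟩
  · obtain ⟨k, rfl⟩ : ∃ k', k = k' + 1 := ⟨k - 1, by omega⟩
    rw [Nat.add_sub_cancel, hr, hℓ k (by omega), hℓ (k + 1) (by omega)]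
    exact ⟨h.iterate_left_lt_succ (by omega), rfl⟩
  · rw [hℓ n (by omega), ← neg_div]
    exact (h.iterate_left_mem_cylinderOne le_rfl (Or.inr hy1)).2

theorem orbits_of_eq_inv (h : EvenParams p c lam α) (hα : α = 1 / lam) :
    (∀ n, 1 ≤ n → n ≤ p - 1 → leftOrbit lam α (n - 1) = rightOrbit lam α n) ∧
    (∀ n, 1 ≤ n → n ≤ p - 2 → rightOrbit lam α n < leftOrbit lam α n) ∧
    rightOrbit lam α (p - 1) = -(1 / ((α + 1) * lam)) ∧ -(1 / ((α + 1) * lam)) < 0 ∧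
    0 < rightOrbit lam α 0 := by
  have hy : α * lam = 1 := by rw [hα, one_div_mul_cancel h.lam_pos.ne']
  have hδ : 0 < 1 / ((α + 1) * lam) := div_pos one_pos (by nlinarith [h.lam_pos, h.α_pos])
  obtain ⟨n, rfl⟩ : ∃ n, p = n + 2 := ⟨p - 2, by have := h.two_le; omega⟩
  simp only [show n + 2 - 2 = n by omega, show n + 2 - 1 = n + 1 by omega]
  have hℓ (k : ℕ) (hk : k ≤ n) := h.leftOrbit_eq (k := k) (by omega) (Or.inl (by omega))
  have hr (k : ℕ) : rightOrbit lam α (k + 1) = leftOrbit lam α k := by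
    rw [rightOrbit_succ_eq h, leftOrbit, hy, negBranch, sub_one_mul, hy]
    norm_num
  have hend : leftOrbit lam α n = -(1 / ((α + 1) * lam)) := by
    rw [hℓ n le_rfl]
    refine (negBranch_strictMonoOn lam).injOn (h.iterate_left_neg le_rfl) (neg_neg_of_pos hδ) ?_
    rw [← iterate_succ_apply' (negBranch lam), h.iterate_left_pred rfl, ← neg_div,
      negBranch_neg_inv, hy, add_one_mul, hy]
    simp [(by linarith [h.lam_lt_two] : (2 : ℝ) - lam ≠ 0)]
  refine ⟨fun k hk1 hkn => ?_, fun k hk1 hkn => ?_, by rw [hr, hend], neg_neg_of_pos hδ,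
    by rw [rightOrbit, Function.iterate_zero_apply, hy]; exact one_pos⟩
  · obtain ⟨k, rfl⟩ : ∃ k', k = k' + 1 := ⟨k - 1, by omega⟩
    rw [Nat.add_sub_cancel, hr]
  · obtain ⟨k, rfl⟩ : ∃ k', k = k' + 1 := ⟨k - 1, by omega⟩
    rw [hr, hℓ k (by omega), hℓ (k + 1) (by omega)]
    exact h.iterate_left_lt_succ (by omega)

end EvenParams

end Rosen

open Rosen

/-- Theorem 2.2 (even case ordering of the orbits of the endpoints). -/
theorem stmt3 (p q : ℕ) (hp : 2 ≤ p) (hq : q = 2 * p) (lam α : ℝ)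
    (hlam : lam = 2 * Real.cos (Real.pi / q))
    (hα1 : 1 / 2 ≤ α) (hα2 : α ≤ 1 / lam)
    (ℓ r : ℕ → ℝ)
    (hℓ : ∀ n, ℓ n = (Tmap lam α)^[n] ((α - 1) * lam))
    (hr : ∀ n, r n = (Tmap lam α)^[n] (α * lam))
    (δ₁ : ℝ) (hδ : δ₁ = 1 / ((α + 1) * lam)) :
    -- (i)  1/2 < α < 1/λ :
    --   ℓ₀ < r₁ < ℓ₁ < ⋯ < r_{p-2} < ℓ_{p-2} < -δ₁ < r_{p-1} < 0 < ℓ_{p-1} < r₀,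
    --   d_p(r₀) = d_p(ℓ₀) + 1 and ℓ_p = r_p
    (1 / 2 < α → α < 1 / lam →
      (∀ n, 1 ≤ n → n ≤ p - 2 → ℓ (n - 1) < r n ∧ r n < ℓ n) ∧
      ℓ (p - 2) < -δ₁ ∧ -δ₁ < r (p - 1) ∧ r (p - 1) < 0 ∧ 0 < ℓ (p - 1) ∧ ℓ (p - 1) < r 0 ∧
      dfun lam α ((Tmap lam α)^[p - 1] (α * lam))
        = dfun lam α ((Tmap lam α)^[p - 1] ((α - 1) * lam)) + 1 ∧
      ℓ p = r p) ∧
    -- (ii)  α = 1/2 :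
    --   ℓ₀ < r₁ = ℓ₁ < ⋯ < r_{p-2} = ℓ_{p-2} < -δ₁ < r_{p-1} = ℓ_{p-1} = 0 < r₀
    (α = 1 / 2 →
      (∀ n, 1 ≤ n → n ≤ p - 2 → ℓ (n - 1) < r n ∧ r n = ℓ n) ∧
      ℓ (p - 2) < -δ₁ ∧ -δ₁ < r (p - 1) ∧ r (p - 1) = ℓ (p - 1) ∧ ℓ (p - 1) = 0 ∧ 0 < r 0) ∧
    -- (iii)  α = 1/λ :
    --   ℓ₀ = r₁ < ℓ₁ = r₂ < ⋯ < ℓ_{p-2} = r_{p-1} = -δ₁ < 0 < r₀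
    (α = 1 / lam →
      (∀ n, 1 ≤ n → n ≤ p - 1 → ℓ (n - 1) = r n) ∧
      (∀ n, 1 ≤ n → n ≤ p - 2 → r n < ℓ n) ∧
      r (p - 1) = -δ₁ ∧ -δ₁ < 0 ∧ 0 < r 0) := by
  have hpc : (p : ℝ) * (Real.pi / q) = Real.pi / 2 := by
    have : (p : ℝ) ≠ 0 := by exact_mod_cast (by omega : p ≠ 0)
    rw [hq]; push_cast; field_simp
  have h : EvenParams p (Real.pi / q) lam α := ⟨hp, hpc, hlam, hα1, hα2⟩
  obtain rfl : ℓ = leftOrbit lam α := funext hℓ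
  obtain rfl : r = rightOrbit lam α := funext hr
  subst hδ
  exact ⟨h.orbits_of_half_lt_of_lt_inv, h.orbits_of_eq_half, h.orbits_of_eq_inv⟩
end

section
/- Let q = 2h+3 with h ≥ 1 and λ = 2cos(π/q). The system of relations H_1 = 1/(λ + H_{2h+2}), H_2 = 1/λ, H_n = 1/(λ − H_{n−2}) for n = 3, 4, …, 2h+2, H_{2h+1} = λ/2, and H_{2h} + H_{2h+2} = λ, admits the unique solution H_{2n} = sin(nπ/q)/sin((n+1)π/q) for n = 1, …, h+1 and H_{2n−1} = (sin((n−1)π/q) + sin(nπ/q))/(sin(nπ/q) + sin((n+1)π/q)) for n = 1, …, h+1; in particular H_{2h+2} = 1. -/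
/-!
With `θ = π / q`, the sequence `u k = sin (k θ)` satisfies `u (k + 2) = λ u (k + 1) - u k`,
and so does `u k + u (k + 1)`. For any solution of this recurrence the ratios `u k / u (k + 1)`
obey `x ↦ 1 / (λ - x)`, so the relations `H n = 1 / (λ - H (n - 2))` propagate `H 2 = u 1 / u 2`
along the even indices and `H 1` along the odd ones. Since `(h + 2) θ = π - (h + 1) θ`, we get
`u (h + 2) = u (h + 1)`, hence `H (2h + 2) = 1`; this pins down `H 1 = 1 / (λ + 1)` and also yields
the two relations at the top indices.
-/

open Real

def ThreeTermRecurrence (c : ℝ) (u : ℕ → ℝ) : Prop :=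
  ∀ n, u (n + 2) = c * u (n + 1) - u n

namespace ThreeTermRecurrence

variable {c : ℝ} {u : ℕ → ℝ}

theorem shift (hu : ThreeTermRecurrence c u) : ThreeTermRecurrence c (fun n ↦ u (n + 1)) :=
  fun n ↦ hu (n + 1)

theorem add_shift (hu : ThreeTermRecurrence c u) :
    ThreeTermRecurrence c (fun n ↦ u n + u (n + 1)) := fun n ↦ by
  simp only [hu n, hu (n + 1)]
  ring

theorem ratio_succ (hu : ThreeTermRecurrence c u) {n : ℕ} (hn : u (n + 1) ≠ 0) :
    u (n + 1) / u (n + 2) = 1 / (c - u n / u (n + 1)) := by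
  rw [hu n, sub_div' hn, one_div_div, mul_comm]

theorem eq_ratio_iff (hu : ThreeTermRecurrence c u) {x : ℕ → ℝ} {N : ℕ}
    (hne : ∀ n < N, u (n + 1) ≠ 0) :
    (x 0 = u 0 / u 1 ∧ ∀ n < N, x (n + 1) = 1 / (c - x n)) ↔
      ∀ n ≤ N, x n = u n / u (n + 1) := by
  constructor
  · rintro ⟨h0, hx⟩ n hn
    induction n with
    | zero => exact h0
    | succ n ih => rw [hx n hn, ih (by omega), hu.ratio_succ (hne n hn)]
  · intro hx
    refine ⟨hx 0 (Nat.zero_le _), fun n hn ↦ ?_⟩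
    rw [hx n hn.le, hx (n + 1) hn, hu.ratio_succ (hne n hn)]

end ThreeTermRecurrence

theorem threeTermRecurrence_sin_nat_mul (θ : ℝ) :
    ThreeTermRecurrence (2 * cos θ) (fun n ↦ sin (n * θ)) := fun n ↦ by
  have h₁ : ((n + 2 : ℕ) : ℝ) * θ = (n + 1 : ℕ) * θ + θ := by push_cast; ring
  have h₂ : (n : ℝ) * θ = (n + 1 : ℕ) * θ - θ := by push_cast; ring
  dsimp only
  rw [h₁, h₂, sin_add, sin_sub]
  ring

theorem forall_sub_two_iff_even_odd {α : Type*} (H : ℕ → α) (f : α → α) (h : ℕ) :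
    (∀ n, 3 ≤ n → n ≤ 2 * h + 2 → H n = f (H (n - 2))) ↔
      (∀ n < h, H (2 * (n + 1) + 2) = f (H (2 * n + 2))) ∧
        ∀ n < h, H (2 * (n + 1) + 1) = f (H (2 * n + 1)) := by
  refine ⟨fun hH ↦ ⟨fun n hn ↦ ?_, fun n hn ↦ ?_⟩, fun ⟨he, ho⟩ n h3 hn ↦ ?_⟩
  · have e := hH (2 * (n + 1) + 2) (by omega) (by omega)
    rwa [show 2 * (n + 1) + 2 - 2 = 2 * n + 2 by omega] at e
  · have e := hH (2 * (n + 1) + 1) (by omega) (by omega)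
    rwa [show 2 * (n + 1) + 1 - 2 = 2 * n + 1 by omega] at e
  · obtain ⟨k, rfl | rfl⟩ := Nat.even_or_odd' n
    · obtain ⟨m, rfl⟩ : ∃ m, k = m + 2 := ⟨k - 2, by omega⟩
      simpa [show 2 * (m + 2) - 2 = 2 * m + 2 by omega, mul_add] using he m (by omega)
    · obtain ⟨m, rfl⟩ : ∃ m, k = m + 1 := ⟨k - 1, by omega⟩
      simpa [show 2 * (m + 1) + 1 - 2 = 2 * m + 1 by omega] using ho m (by omega)

theorem forall_one_le_le_succ_iff {P : ℕ → Prop} (N : ℕ) :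
    (∀ n, 1 ≤ n → n ≤ N + 1 → P n) ↔ ∀ n ≤ N, P (n + 1) := by
  refine ⟨fun hP n hn ↦ hP (n + 1) (by omega) (by omega), fun hP n h1 hn ↦ ?_⟩
  obtain ⟨m, rfl⟩ := Nat.exists_eq_add_of_le' h1
  exact hP m (by omega)

theorem heights_iff_eq_ratios {c : ℝ} {u H : ℕ → ℝ} {h : ℕ} (hh : 1 ≤ h)
    (hu : ThreeTermRecurrence c u) (hu0 : u 0 = 0) (hpos : ∀ k, 1 ≤ k → k ≤ h + 1 → 0 < u k)
    (hsymm : u (h + 2) = u (h + 1)) :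
    (H 1 = 1 / (c + H (2 * h + 2)) ∧ H 2 = 1 / c ∧
        (∀ n, 3 ≤ n → n ≤ 2 * h + 2 → H n = 1 / (c - H (n - 2))) ∧
        H (2 * h + 1) = c / 2 ∧ H (2 * h) + H (2 * h + 2) = c) ↔
      (∀ n ≤ h, H (2 * n + 2) = u (n + 1) / u (n + 2)) ∧
        ∀ n ≤ h, H (2 * n + 1) = (u n + u (n + 1)) / (u (n + 1) + u (n + 2)) := by
  have heven := hu.shift.eq_ratio_iff (x := fun n ↦ H (2 * n + 2)) (N := h)
    fun n hn ↦ (hpos (n + 2) (by omega) (by omega)).ne'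
  have hodd := hu.add_shift.eq_ratio_iff (x := fun n ↦ H (2 * n + 1)) (N := h)
    fun n hn ↦ (add_pos (hpos (n + 1) (by omega) (by omega))
      (hpos (n + 2) (by omega) (by omega))).ne'
  have hu1 := hpos 1 le_rfl (by omega)
  have hu2 : u 2 = c * u 1 := by simpa [hu0] using hu 0
  have hc : 0 < c := pos_of_mul_pos_left (hu2 ▸ hpos 2 (by omega) (by omega)) hu1.le
  have hu_top := hpos (h + 1) (by omega) le_rfl
  have hu_pen : u h = (c - 1) * u (h + 1) := by linarith [hu h]
  have htop : u (h + 1) / u (h + 2) = 1 := by rw [hsymm, div_self hu_top.ne']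
  have hfirst : (u 0 + u 1) / (u 1 + u 2) = 1 / (c + 1) := by
    rw [hu0, hu2, zero_add, div_eq_div_iff (by positivity) (by positivity)]
    ring
  have hsecond : u 1 / u 2 = 1 / c := by
    rw [hu2, div_eq_div_iff (by positivity) hc.ne']
    ring
  have hmid : (u h + u (h + 1)) / (u (h + 1) + u (h + 2)) = c / 2 := by
    rw [hsymm, hu_pen, div_eq_div_iff (by positivity) two_ne_zero]
    ring
  have hrec := forall_sub_two_iff_even_odd H (fun t ↦ 1 / (c - t)) h
  constructor
  · rintro ⟨h1, h2, hr, -, -⟩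
    obtain ⟨re, ro⟩ := hrec.1 hr
    have ev := heven.1 ⟨h2.trans hsecond.symm, re⟩
    have hH_top : H (2 * h + 2) = 1 := (ev h le_rfl).trans htop
    exact ⟨ev, hodd.1 ⟨by rw [h1, hH_top, hfirst], ro⟩⟩
  · rintro ⟨ev, od⟩
    obtain ⟨e2, re⟩ := heven.2 ev
    obtain ⟨e1, ro⟩ := hodd.2 od
    have hH_top : H (2 * h + 2) = 1 := (ev h le_rfl).trans htop
    refine ⟨?_, e2.trans hsecond, hrec.2 ⟨re, ro⟩, (od h le_rfl).trans hmid, ?_⟩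
    · rw [hH_top, ← hfirst]; exact e1
    · have hH_pen := ev (h - 1) (by omega)
      rw [show 2 * (h - 1) + 2 = 2 * h by omega, show h - 1 + 1 = h by omega,
        show h - 1 + 2 = h + 1 by omega] at hH_pen
      rw [hH_pen, hH_top, hu_pen]
      field_simp
      ring

theorem sin_nat_mul_pi_div_pos {q k : ℕ} (hk₀ : 0 < k) (hkq : k < q) :
    0 < sin (k * π / q) := by
  have hq : (0 : ℝ) < q := by exact_mod_cast hk₀.trans hkq
  apply sin_pos_of_pos_of_lt_pi (by positivity)
  rw [div_lt_iff₀ hq, mul_comm π]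
  exact mul_lt_mul_of_pos_right (Nat.cast_lt.mpr hkq) pi_pos

theorem sin_sub_nat_mul_pi_div {q k : ℕ} (hk : k ≤ q) :
    sin ((q - k : ℕ) * π / q) = sin (k * π / q) := by
  rcases Nat.eq_zero_or_pos q with rfl | hq
  · obtain rfl : k = 0 := by omega
    simp
  rw [Nat.cast_sub hk, sub_mul, sub_div, mul_div_cancel_left₀ _ (by positivity), sin_pi_sub]

/-- The system of relations for the heights of the odd-index natural extension domain
(case `ρ/λ < α ≤ 1/λ`) admits the unique solution `H_{2n} = sin(nπ/q)/sin((n+1)π/q)`,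
`H_{2n-1} = (sin((n-1)π/q) + sin(nπ/q))/(sin(nπ/q) + sin((n+1)π/q))`;
in particular `H_{2h+2} = 1`. -/
theorem stmt10 (h q : ℕ) (hh : 1 ≤ h) (hq : q = 2 * h + 3) (lam : ℝ)
    (hlam : lam = 2 * Real.cos (Real.pi / q)) (H : ℕ → ℝ) :
    ((H 1 = 1 / (lam + H (2 * h + 2)) ∧
      H 2 = 1 / lam ∧
      (∀ n, 3 ≤ n → n ≤ 2 * h + 2 → H n = 1 / (lam - H (n - 2))) ∧
      H (2 * h + 1) = lam / 2 ∧
      H (2 * h) + H (2 * h + 2) = lam)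
      ↔
      ((∀ n : ℕ, 1 ≤ n → n ≤ h + 1 →
          H (2 * n) = Real.sin (n * Real.pi / q) / Real.sin (((n : ℝ) + 1) * Real.pi / q)) ∧
        (∀ n : ℕ, 1 ≤ n → n ≤ h + 1 →
          H (2 * n - 1) = (Real.sin (((n : ℝ) - 1) * Real.pi / q) + Real.sin (n * Real.pi / q))
            / (Real.sin (n * Real.pi / q) + Real.sin (((n : ℝ) + 1) * Real.pi / q))))) ∧
    ((∀ n : ℕ, 1 ≤ n → n ≤ h + 1 →
        H (2 * n) = Real.sin (n * Real.pi / q) / Real.sin (((n : ℝ) + 1) * Real.pi / q)) →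
      H (2 * h + 2) = 1) := by
  set u : ℕ → ℝ := fun k ↦ sin (k * π / q)
  have hu : ThreeTermRecurrence lam u := by
    simpa only [u, hlam, mul_div_assoc] using threeTermRecurrence_sin_nat_mul (π / q)
  have hsymm : u (h + 2) = u (h + 1) := by
    have := sin_sub_nat_mul_pi_div (q := q) (k := h + 1) (by omega)
    rwa [show q - (h + 1) = h + 2 by omega] at this
  have hsys := heights_iff_eq_ratios (H := H) hh hu (by simp [u])
    (fun k hk₀ hk ↦ sin_nat_mul_pi_div_pos hk₀ (by omega)) hsymm
  have heven : (∀ n : ℕ, 1 ≤ n → n ≤ h + 1 →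
      H (2 * n) = sin (n * π / q) / sin (((n : ℝ) + 1) * π / q)) ↔
        ∀ n ≤ h, H (2 * n + 2) = u (n + 1) / u (n + 2) :=
    (forall_one_le_le_succ_iff h).trans <| forall₂_congr fun n _ ↦ by
      simp [u, mul_add, add_assoc, one_add_one_eq_two]
  have hodd : (∀ n : ℕ, 1 ≤ n → n ≤ h + 1 →
      H (2 * n - 1) = (sin (((n : ℝ) - 1) * π / q) + sin (n * π / q))
        / (sin (n * π / q) + sin (((n : ℝ) + 1) * π / q))) ↔
        ∀ n ≤ h, H (2 * n + 1) = (u n + u (n + 1)) / (u (n + 1) + u (n + 2)) :=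
    (forall_one_le_le_succ_iff h).trans <| forall₂_congr fun n _ ↦ by
      simp [u, mul_add, add_assoc, one_add_one_eq_two]
  refine ⟨by rw [hsys, heven, hodd], fun he ↦ ?_⟩
  rw [(heven.1 he) h le_rfl, hsymm, div_self (sin_nat_mul_pi_div_pos (by omega) (by omega)).ne']
end
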